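/- Let 1 < p < 2 and let φ, B be as above. Define the Bellman function B(x,z) for x,z > 0. Then B satisfies the majorization B(x,z) ≤ (p-1)^{-p} x^p / p + z^{p'} / p' for all x,z > 0, where p' = p/(p-1). -/

import Mathlib

noncomputable def B (p : ℝ) (φ : ℝ → ℝ) (x z : ℝ) : ℝ :=
  x * z * ((p - 1) / p * φ (x ^ (1 - p) * z) + (2 - p) / (p * (p - 1))
    + 1 / (p * (p - 1) * φ (x ^ (1 - p) * z)))

/-!
Put `s = x ^ (1 - p) * z` and `u = φ s`; since `x * z = x ^ p * s` and `z ^ p' = x ^ p * s ^ p'`,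
the claim reduces to `x = 1`. The relation defining `φ` says `s = ψ u` with
`ψ u = u ((1 + u) / p) ^ (p - 2)`, and if `Ψ` is the primitive of `ψ` vanishing at `1 / (p - 1)`,
then `s` times the bracket in `B` is the Legendre expression `u s - Ψ u`. Young's inequality
`u s ≤ u ^ p / p + s ^ p' / p'` leaves `u ^ p / p - Ψ u ≤ (p - 1) ^ (-p) / p`, which holds because
the derivative `u ^ (p - 1) - ψ u` is nonnegative up to `u = 1 / (p - 1)` and nonpositive after it.
-/

open Set

theorem isMaxOn_Ioi_of_hasDerivAt {f f' : ℝ → ℝ} {a c : ℝ} (hac : a < c)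
    (hf : ∀ y, a < y → HasDerivAt f (f' y) y)
    (hleft : ∀ y, a < y → y < c → 0 ≤ f' y) (hright : ∀ y, c < y → f' y ≤ 0) :
    IsMaxOn f (Ioi a) c := by
  have hcont : ContinuousOn f (Ioi a) := fun y hy =>
    (hf y hy).continuousAt.continuousWithinAt
  have hdiff : DifferentiableOn ℝ f (Ioi a) := fun y hy =>
    (hf y hy).differentiableAt.differentiableWithinAt
  have hderiv : ∀ y, a < y → deriv f y = f' y := fun y hy => (hf y hy).deriv
  refine isMaxOn_iff.2 fun y (hy : a < y) => ?_
  rcases le_total y c with hyc | hcy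
  · have hmono : MonotoneOn f (Ioc a c) := by
      refine monotoneOn_of_deriv_nonneg (convex_Ioc a c) (hcont.mono Ioc_subset_Ioi_self)
        (hdiff.mono ?_) fun x hx => ?_
      · rw [interior_Ioc]; exact Ioo_subset_Ioi_self
      · rw [interior_Ioc] at hx
        rw [hderiv x hx.1]; exact hleft x hx.1 hx.2
    exact hmono ⟨hy, hyc⟩ ⟨hac, le_rfl⟩ hyc
  · have hanti : AntitoneOn f (Ici c) := by
      refine antitoneOn_of_deriv_nonpos (convex_Ici c)
        (hcont.mono fun x hx => hac.trans_le hx) (hdiff.mono ?_) fun x hx => ?_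
      · rw [interior_Ici]; exact fun x hx => hac.trans hx
      · rw [interior_Ici] at hx
        rw [hderiv x (hac.trans hx)]; exact hright x hx
    exact hanti (mem_Ici.2 le_rfl) hcy hcy

namespace Bellman

/-- The inverse of `φ`: its defining relation says `psi p (φ s) = s`. -/
noncomputable def psi (p u : ℝ) : ℝ := u * ((1 + u) / p) ^ (p - 2)

noncomputable def Psi (p u : ℝ) : ℝ := ((1 + u) / p) ^ (p - 1) * (u - 1 / (p - 1))

variable {p u : ℝ}

theorem psi_eq_of_mul_rpow_eq {s : ℝ} (hp : 0 < p) (hu : -1 < u)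
    (h : u * (1 + u) ^ (p - 2) = p ^ (p - 2) * s) : psi p u = s := by
  have hpp : p ^ (p - 2) ≠ 0 := (Real.rpow_pos_of_pos hp _).ne'
  rw [psi, Real.div_rpow (by linarith) hp.le, ← mul_div_assoc, h, mul_div_cancel_left₀ _ hpp]

theorem rpow_sub_one_eq_rpow_sub_two_mul (hp : 0 < p) (hu : -1 < u) :
    ((1 + u) / p) ^ (p - 1) = ((1 + u) / p) ^ (p - 2) * ((1 + u) / p) := by
  rw [← Real.rpow_add_one (div_pos (by linarith) hp).ne']
  ring_nf

theorem hasDerivAt_Psi (hp : 1 < p) (hu : -1 < u) : HasDerivAt (Psi p) (psi p u) u := by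
  have hx : 0 < (1 + u) / p := div_pos (by linarith) (by linarith)
  have hbase : HasDerivAt (fun y => (1 + y) / p) (1 / p) u :=
    ((hasDerivAt_id u).const_add 1).div_const p
  refine ((hbase.rpow_const (p := p - 1) (Or.inl hx.ne')).mul
    ((hasDerivAt_id u).sub_const (1 / (p - 1)))).congr_deriv ?_
  have : p - 1 ≠ 0 := by linarith
  have : p ≠ 0 := by linarith
  rw [psi, show p - 1 - 1 = p - 2 by ring, rpow_sub_one_eq_rpow_sub_two_mul (by linarith) hu]
  simp only [id]
  field_simp
  ring

theorem Psi_one_div_sub_one : Psi p (1 / (p - 1)) = 0 := by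
  simp [Psi]

theorem psi_le_rpow_sub_one_iff (hp1 : 1 < p) (hp2 : p < 2) (hu : 0 < u) :
    psi p u ≤ u ^ (p - 1) ↔ u ≤ 1 / (p - 1) := by
  rw [psi, show p - 1 = p - 2 + 1 by ring, Real.rpow_add_one hu.ne', mul_comm (u ^ _),
    mul_le_mul_iff_right₀ hu, Real.rpow_le_rpow_iff_of_neg (by positivity) hu (by linarith),
    le_div_iff₀ (by linarith), le_div_iff₀ (by linarith)]
  constructor <;> intro h <;> linarith

theorem rpow_div_sub_Psi_le (hp1 : 1 < p) (hp2 : p < 2) (hu : 0 < u) :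
    u ^ p / p - Psi p u ≤ (p - 1) ^ (-p) / p := by
  have hp : 0 < p - 1 := by linarith
  have hc : 0 < 1 / (p - 1) := by positivity
  have hderiv : ∀ y, 0 < y →
      HasDerivAt (fun y => y ^ p / p - Psi p y) (y ^ (p - 1) - psi p y) y := fun y hy =>
    (((Real.hasDerivAt_rpow_const (Or.inl hy.ne')).div_const p).sub
      (hasDerivAt_Psi hp1 (by linarith))).congr_deriv (by field_simp)
  have hmax := isMaxOn_Ioi_of_hasDerivAt hc hderiv
    (fun y hy hyc => sub_nonneg.2 ((psi_le_rpow_sub_one_iff hp1 hp2 hy).2 hyc.le))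
    (fun y hy => sub_nonpos.2 (not_le.1 fun h =>
      hy.not_ge ((psi_le_rpow_sub_one_iff hp1 hp2 (hc.trans hy)).1 h)).le)
  have := isMaxOn_iff.1 hmax u hu
  rwa [Psi_one_div_sub_one, sub_zero, one_div, Real.inv_rpow hp.le,
    ← Real.rpow_neg hp.le] at this

theorem psi_mul_eq_sub_Psi (hp : 1 < p) (hu : 0 < u) :
    psi p u * ((p - 1) / p * u + (2 - p) / (p * (p - 1)) + 1 / (p * (p - 1) * u))
      = u * psi p u - Psi p u := by
  have : p - 1 ≠ 0 := by linarith
  have : p ≠ 0 := by linarith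
  rw [psi, Psi, rpow_sub_one_eq_rpow_sub_two_mul (by linarith) (by linarith)]
  field_simp
  ring

theorem psi_mul_le (hp1 : 1 < p) (hp2 : p < 2) (hu : 0 < u) :
    psi p u * ((p - 1) / p * u + (2 - p) / (p * (p - 1)) + 1 / (p * (p - 1) * u))
      ≤ (p - 1) ^ (-p) / p + psi p u ^ (p / (p - 1)) / (p / (p - 1)) := by
  have hpsi : 0 ≤ psi p u := mul_nonneg hu.le (Real.rpow_nonneg (by positivity) _)
  have hyoung := Real.young_inequality_of_nonneg hu.le hpsi
    ((Real.holderConjugate_iff_eq_conjExponent hp1).2 rfl)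
  rw [psi_mul_eq_sub_Psi hp1 hu]
  linarith [rpow_div_sub_Psi_le hp1 hp2 hu]

end Bellman

theorem stmt_15 (p : ℝ) (hp1 : 1 < p) (hp2 : p < 2) (φ : ℝ → ℝ)
    (hφpos : ∀ s, 0 < s → 0 < φ s)
    (hφ : ∀ s, 0 < s → φ s * (1 + φ s) ^ (p - 2) = p ^ (p - 2) * s) :
    ∀ x z : ℝ, 0 < x → 0 < z →
      B p φ x z ≤ (p - 1) ^ (-p) * x ^ p / p + z ^ (p / (p - 1)) / (p / (p - 1)) := by
  intro x z hx hz
  set q := p / (p - 1)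
  set s := x ^ (1 - p) * z
  have hs : 0 < s := mul_pos (Real.rpow_pos_of_pos hx _) hz
  have hu := hφpos s hs
  have hpsi : Bellman.psi p (φ s) = s :=
    Bellman.psi_eq_of_mul_rpow_eq (by linarith) (by linarith) (hφ s hs)
  have hz_eq : z = x ^ (p - 1) * s := by
    rw [← mul_assoc, ← Real.rpow_add hx]; norm_num
  have hxz : x * z = x ^ p * s := by
    rw [hz_eq, ← mul_assoc, ← Real.rpow_one_add' hx.le (by linarith)]; norm_num
  have hzq : z ^ q = x ^ p * s ^ q := by
    rw [hz_eq, Real.mul_rpow (Real.rpow_nonneg hx.le _) hs.le, ← Real.rpow_mul hx.le,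
      mul_div_cancel₀ _ (by linarith : p - 1 ≠ 0)]
  have key := Bellman.psi_mul_le hp1 hp2 hu
  rw [hpsi] at key
  calc B p φ x z = x ^ p * (s * ((p - 1) / p * φ s + (2 - p) / (p * (p - 1))
        + 1 / (p * (p - 1) * φ s))) := by rw [B, hxz]; ring
    _ ≤ x ^ p * ((p - 1) ^ (-p) / p + s ^ q / q) := by gcongr
    _ = (p - 1) ^ (-p) * x ^ p / p + z ^ q / q := by rw [hzq]; ring
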